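/- Let d≥1 and let k be a kernel of the form k(t,z,τ,ζ) = m(t,z,ζ)δ_{τ=0} + r(t,z,τ,ζ) with r ∈ C_b(R^{1+d}×R^{1+d};R^d) and m ∈ C_b(R^{1+d}×R^d;R^d) satisfying the causality condition (r(t,z,τ,ζ)=0 whenever τ∉[0,t]; m(t,z,ζ)=0 for t<0) and, for each T>0, the Lipschitz condition |r(t,z,τ,ζ)−r(t,z′,τ,ζ′)| + |m(t,z,ζ₀)−m(t,z′,ζ₀′)| ≤ Lip_T(k)(min(1,|z−z′|) + min(1,|ζ−ζ′|) + min(1,|ζ₀−ζ₀′|)) for all t,τ ∈ [0,T]. Then for every Borel probability measure ρ^{in} on R^d, the mean-field integro-differential equation Ż(t,z) = Kρ(t,Z(t,z)), where ρ(t,·) = Z(t,·)#ρ^{in} and Z(0,z) = z, has a unique global solution Z ∈ C(R_+×R^d;R^d) such that t ↦ Z(t,z) is continuously differentiable on R_+ for each z ∈ R^d. -/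

import Mathlib

open MeasureTheory Real Set
open scoped ENNReal NNReal Topology

noncomputable section

/-- Euclidean space ℝ^d. -/
abbrev Rd (d : ℕ) : Type := EuclideanSpace ℝ (Fin d)

/-- Solution of the mean-field integro-differential equation
`Ż(t,z) = Kρ(t, Z(t,z))`, `ρ(t,·) = Z(t,·)#ρ^in`, `Z(0,z) = z`, where the operator `K`
is associated with the kernel `k(t,z,τ,ζ) = m(t,z,ζ)δ_{τ=0} + r(t,z,τ,ζ)`:
`Kμ(t,z) = ∫∫ r(t,z,τ,ζ) μ(τ,dζ) dτ + ∫ m(t,z,ζ) μ(0,dζ)`. -/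
def IsMFSol {d : ℕ} (r : (ℝ × Rd d) → (ℝ × Rd d) → Rd d)
    (m : (ℝ × Rd d) → Rd d → Rd d) (ρin : Measure (Rd d))
    (Z : ℝ → Rd d → Rd d) : Prop :=
  (Continuous fun p : ℝ × Rd d => Z p.1 p.2) ∧
  (∀ z, Z 0 z = z) ∧
  (∀ z : Rd d, ∀ t : ℝ, 0 ≤ t →
    HasDerivAt (fun s => Z s z)
      ((∫ τ in (0:ℝ)..t, ∫ ζ, r (t, Z t z) (τ, Z τ ζ) ∂ρin)
        + ∫ ζ, m (t, Z t z) (Z 0 ζ) ∂ρin) t)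

/-!
Writing `Z t z = z + Y (t, z)`, the mean-field equation on a horizon `[0, T]` in integral form is a
fixed-point problem `Y = P Y` for a Picard map on bounded continuous displacements. The Lipschitz
bound on the kernel gives the Volterra-type estimate
`‖Pⁿ Y₁ (t, z) - Pⁿ Y₂ (t, z)‖ ≤ (c t)ⁿ / n! * dist Y₁ Y₂`, so an iterate of `P` is a contraction
and the solution on `[0, T]` exists and is unique. By uniqueness the solutions on `[0, n + 1]` are
compatible and glue to a global one; continued to `t < 0` along its tangent at `0`, it is
differentiable at `t = 0` as well.
-/

open Function
open scoped Nat

theorem existsUnique_isFixedPt_of_dist_iterate_le {X : Type*} [MetricSpace X] [CompleteSpace X]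
    [Nonempty X] {f : X → X} {C : ℝ}
    (hf : ∀ n x y, dist (f^[n] x) (f^[n] y) ≤ C ^ n / n ! * dist x y) :
    ∃! x, IsFixedPt f x := by
  obtain ⟨n, hn⟩ := (FloorSemiring.tendsto_pow_div_factorial_atTop C).eventually
    (gt_mem_nhds zero_lt_one) |>.exists
  have hcontr : ContractingWith (C ^ n / n !).toNNReal f^[n] :=
    ⟨Real.toNNReal_lt_one.2 hn, LipschitzWith.of_dist_le_mul fun x y =>
      (hf n x y).trans (mul_le_mul_of_nonneg_right (Real.le_coe_toNNReal _) dist_nonneg)⟩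
  exact ⟨_, hcontr.isFixedPt_fixedPoint_iterate,
    fun x hx => hcontr.fixedPoint_unique (hx.iterate n)⟩

theorem integral_mul_mul_pow_div_factorial (c a : ℝ) (n : ℕ) :
    ∫ s in (0:ℝ)..a, c * ((c * s) ^ n / n !) = (c * a) ^ (n + 1) / (n + 1)! := by
  simp_rw [mul_pow, mul_div_assoc, ← mul_assoc, ← mul_div_assoc]
  rw [intervalIntegral.integral_div, intervalIntegral.integral_const_mul, integral_pow,
    Nat.factorial_succ]
  push_cast
  field_simp
  ring

theorem continuous_integral_of_norm_le {X α G : Type*} [TopologicalSpace X]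
    [FirstCountableTopology X] [TopologicalSpace α] [MeasurableSpace α] [OpensMeasurableSpace α]
    [NormedAddCommGroup G] [NormedSpace ℝ G] [SecondCountableTopologyEither α G]
    {μ : Measure α} [IsFiniteMeasure μ] {F : X → α → G} (hF : Continuous (uncurry F)) {C : ℝ}
    (hC : ∀ x a, ‖F x a‖ ≤ C) :
    Continuous fun x => ∫ a, F x a ∂μ :=
  continuous_of_dominated (fun x => (hF.comp (Continuous.prodMk_right x)).aestronglyMeasurable)
    (fun x => .of_forall (hC x)) (integrable_const C)
    (.of_forall fun a => hF.comp (Continuous.prodMk_left a))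

theorem norm_integral_sub_integral_le {α G : Type*} [MeasurableSpace α] [NormedAddCommGroup G]
    [NormedSpace ℝ G] {μ : Measure α} [IsProbabilityMeasure μ] {f g : α → G}
    (hf : Integrable f μ) (hg : Integrable g μ) {C : ℝ} (h : ∀ a, ‖f a - g a‖ ≤ C) :
    ‖∫ a, f a ∂μ - ∫ a, g a ∂μ‖ ≤ C := by
  rw [← integral_sub hf hg]
  simpa using norm_integral_le_of_norm_le_const (μ := μ) (.of_forall h)

def clamp (T t : ℝ) : ℝ := max 0 (min t T)

theorem clamp_mem_Icc {T : ℝ} (hT : 0 ≤ T) (t : ℝ) : clamp T t ∈ Icc 0 T :=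
  ⟨le_max_left _ _, max_le hT (min_le_right _ _)⟩

theorem clamp_of_mem_Icc {T t : ℝ} (ht : t ∈ Icc 0 T) : clamp T t = t := by
  simp [clamp, min_eq_left ht.2, max_eq_right ht.1]

theorem continuous_clamp (T : ℝ) : Continuous (clamp T) := by
  unfold clamp
  fun_prop

section Kernel

variable {E : Type*} [NormedAddCommGroup E]

structure IsBoundedContinuousKernel (r : ℝ × E → ℝ × E → E) (m : ℝ × E → E → E)
    (Cr Cm : ℝ) : Prop where
  continuous_r : Continuous fun q : (ℝ × E) × (ℝ × E) => r q.1 q.2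
  continuous_m : Continuous fun q : (ℝ × E) × E => m q.1 q.2
  norm_r_le : ∀ p q, ‖r p q‖ ≤ Cr
  norm_m_le : ∀ p ζ, ‖m p ζ‖ ≤ Cm

structure IsLipschitzKernelOn (r : ℝ × E → ℝ × E → E) (m : ℝ × E → E → E) (T L : ℝ) :
    Prop where
  nonneg : 0 ≤ L
  norm_r_sub_le : ∀ t ∈ Icc 0 T, ∀ τ ∈ Icc 0 T, ∀ z z' ζ ζ' : E,
    ‖r (t, z) (τ, ζ) - r (t, z') (τ, ζ')‖ ≤ L * (‖z - z'‖ + ‖ζ - ζ'‖)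
  norm_m_sub_le : ∀ t ∈ Icc 0 T, ∀ z z' ζ ζ' : E,
    ‖m (t, z) ζ - m (t, z') ζ'‖ ≤ L * (‖z - z'‖ + ‖ζ - ζ'‖)

variable {r : ℝ × E → ℝ × E → E} {m : ℝ × E → E → E} {Cr Cm T L : ℝ}

theorem isLipschitzKernelOn_of_le_min (hT : 0 ≤ T) (hL : 0 ≤ L)
    (h : ∀ t ∈ Icc 0 T, ∀ τ ∈ Icc 0 T, ∀ z z' ζ ζ' ζ₀ ζ₀' : E,
      ‖r (t, z) (τ, ζ) - r (t, z') (τ, ζ')‖ + ‖m (t, z) ζ₀ - m (t, z') ζ₀'‖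
        ≤ L * (min 1 ‖z - z'‖ + min 1 ‖ζ - ζ'‖ + min 1 ‖ζ₀ - ζ₀'‖)) :
    IsLipschitzKernelOn r m T L where
  nonneg := hL
  norm_r_sub_le t ht τ hτ z z' ζ ζ' :=
    calc _ ≤ ‖r (t, z) (τ, ζ) - r (t, z') (τ, ζ')‖ + ‖m (t, z) 0 - m (t, z') 0‖ :=
          le_add_of_nonneg_right (norm_nonneg _)
      _ ≤ L * (min 1 ‖z - z'‖ + min 1 ‖ζ - ζ'‖ + min 1 ‖(0 : E) - 0‖) := h t ht τ hτ _ _ _ _ _ _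
      _ ≤ L * (‖z - z'‖ + ‖ζ - ζ'‖) := by
          rw [sub_self, norm_zero, min_eq_right zero_le_one, add_zero]
          gcongr <;> exact min_le_right _ _
  norm_m_sub_le t ht z z' ζ ζ' :=
    calc _ ≤ ‖r (t, z) (0, 0) - r (t, z') (0, 0)‖ + ‖m (t, z) ζ - m (t, z') ζ'‖ :=
          le_add_of_nonneg_left (norm_nonneg _)
      _ ≤ L * (min 1 ‖z - z'‖ + min 1 ‖(0 : E) - 0‖ + min 1 ‖ζ - ζ'‖) :=
          h t ht 0 ⟨le_rfl, hT⟩ _ _ _ _ _ _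
      _ ≤ L * (‖z - z'‖ + ‖ζ - ζ'‖) := by
          rw [sub_self, norm_zero, min_eq_right zero_le_one, add_zero]
          gcongr <;> exact min_le_right _ _

theorem IsBoundedContinuousKernel.nonneg_r (hk : IsBoundedContinuousKernel r m Cr Cm) : 0 ≤ Cr :=
  (norm_nonneg _).trans (hk.norm_r_le 0 0)

theorem IsBoundedContinuousKernel.nonneg_m (hk : IsBoundedContinuousKernel r m Cr Cm) : 0 ≤ Cm :=
  (norm_nonneg _).trans (hk.norm_m_le 0 0)

variable [NormedSpace ℝ E] [MeasurableSpace E]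

/-- `Kρ(t, Z t z)` for `ρ(τ) = (Z τ)#ρ`, written through `∫ f d((Z τ)#ρ) = ∫ f ∘ Z τ dρ`. -/
def mfField (r : ℝ × E → ℝ × E → E) (m : ℝ × E → E → E) (ρ : Measure E) (Z : ℝ → E → E)
    (t : ℝ) (z : E) : E :=
  (∫ τ in (0:ℝ)..t, ∫ ζ, r (t, Z t z) (τ, Z τ ζ) ∂ρ) + ∫ ζ, m (t, Z t z) (Z 0 ζ) ∂ρ

def IsMFSolOn (r : ℝ × E → ℝ × E → E) (m : ℝ × E → E → E) (ρ : Measure E) (T : ℝ)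
    (Z : ℝ → E → E) : Prop :=
  Continuous (uncurry Z) ∧ ∀ t ∈ Icc 0 T, ∀ z, Z t z = z + ∫ s in (0:ℝ)..t, mfField r m ρ Z s z

variable {ρ : Measure E}

theorem norm_mfField_le [IsProbabilityMeasure ρ] (hk : IsBoundedContinuousKernel r m Cr Cm)
    (Z : ℝ → E → E) {t : ℝ} (ht : 0 ≤ t) (z : E) :
    ‖mfField r m ρ Z t z‖ ≤ Cr * t + Cm := by
  refine (norm_add_le _ _).trans (add_le_add ?_ ?_)
  · calc _ ≤ Cr * |t - 0| := intervalIntegral.norm_integral_le_of_norm_le_const fun τ _ =>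
          norm_integral_le_of_norm_le_const (.of_forall fun _ => hk.norm_r_le _ _) |>.trans
            (by simp)
      _ = Cr * t := by rw [sub_zero, abs_of_nonneg ht]
  · exact norm_integral_le_of_norm_le_const (.of_forall fun _ => hk.norm_m_le _ _) |>.trans
      (by simp)

theorem mfField_congr {Z₁ Z₂ : ℝ → E → E} {t : ℝ} (ht : 0 ≤ t)
    (h : ∀ s ∈ Icc 0 t, Z₁ s = Z₂ s) : mfField r m ρ Z₁ t = mfField r m ρ Z₂ t := by
  funext z
  simp only [mfField, h t ⟨ht, le_rfl⟩, h 0 ⟨le_rfl, ht⟩]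
  congr 1
  refine intervalIntegral.integral_congr fun τ hτ => ?_
  rw [uIcc_of_le ht] at hτ
  simp only [h τ hτ]

theorem norm_integral_mfField_le [IsProbabilityMeasure ρ]
    (hk : IsBoundedContinuousKernel r m Cr Cm) (Z : ℝ → E → E) {a : ℝ} (ha : a ∈ Icc 0 T) (z : E) :
    ‖∫ s in (0:ℝ)..a, mfField r m ρ Z s z‖ ≤ (Cr * T + Cm) * T := by
  have hCr := hk.nonneg_r
  calc _ ≤ (Cr * T + Cm) * |a - 0| := intervalIntegral.norm_integral_le_of_norm_le_const
        fun s hs => by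
          rw [uIoc_of_le ha.1] at hs
          refine (norm_mfField_le hk Z hs.1.le z).trans ?_
          gcongr
          exact hs.2.trans ha.2
    _ ≤ (Cr * T + Cm) * T := by
      rw [sub_zero, abs_of_nonneg ha.1]
      have := hk.nonneg_m
      have := ha.1.trans ha.2
      gcongr
      exact ha.2

theorem IsMFSolOn.mono {T' : ℝ} {Z : ℝ → E → E} (h : IsMFSolOn r m ρ T' Z) (hT : T ≤ T') :
    IsMFSolOn r m ρ T Z :=
  ⟨h.1, fun t ht => h.2 t ⟨ht.1, ht.2.trans hT⟩⟩

variable [SecondCountableTopology E] [BorelSpace E]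

theorem continuous_mfField [IsFiniteMeasure ρ] (hk : IsBoundedContinuousKernel r m Cr Cm)
    {Z : ℝ → E → E} (hZ : Continuous (uncurry Z)) : Continuous (uncurry (mfField r m ρ Z)) := by
  have hr := hk.continuous_r
  have hm := hk.continuous_m
  refine .add ?_ ?_
  · refine intervalIntegral.continuous_parametric_intervalIntegral_of_continuous
      (f := fun (p : ℝ × E) τ => ∫ ζ, r (p.1, Z p.1 p.2) (τ, Z τ ζ) ∂ρ) ?_ continuous_fst
    exact continuous_integral_of_norm_le
      (F := fun (q : (ℝ × E) × ℝ) ζ => r (q.1.1, Z q.1.1 q.1.2) (q.2, Z q.2 ζ))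
      (by fun_prop) fun _ _ => hk.norm_r_le _ _
  · exact continuous_integral_of_norm_le (F := fun (p : ℝ × E) ζ => m (p.1, Z p.1 p.2) (Z 0 ζ))
      (by fun_prop) fun _ _ => hk.norm_m_le _ _

variable [IsProbabilityMeasure ρ]

theorem norm_mfField_sub_le (hk : IsBoundedContinuousKernel r m Cr Cm)
    (hL : IsLipschitzKernelOn r m T L) {Z₁ Z₂ : ℝ → E → E} (hZ₁ : Continuous (uncurry Z₁))
    (hZ₂ : Continuous (uncurry Z₂)) {t : ℝ} (ht : t ∈ Icc 0 T) {B : ℝ}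
    (hB : ∀ s ∈ Icc 0 t, ∀ ζ, ‖Z₁ s ζ - Z₂ s ζ‖ ≤ B) (z : E) :
    ‖mfField r m ρ Z₁ t z - mfField r m ρ Z₂ t z‖ ≤ 2 * L * (T + 1) * B := by
  have hr := hk.continuous_r
  have hm := hk.continuous_m
  have hB0 : 0 ≤ B := (norm_nonneg _).trans (hB 0 ⟨le_rfl, ht.1⟩ 0)
  have hz := hB t ⟨ht.1, le_rfl⟩ z
  have hL0 := hL.nonneg
  have hrZ : ∀ Z : ℝ → E → E, Continuous (uncurry Z) →
      Continuous fun τ => ∫ ζ, r (t, Z t z) (τ, Z τ ζ) ∂ρ := fun Z hZ =>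
    continuous_integral_of_norm_le (F := fun τ ζ => r (t, Z t z) (τ, Z τ ζ)) (by fun_prop)
      fun _ _ => hk.norm_r_le _ _
  have h_r : ∀ τ ∈ uIoc 0 t, ‖∫ ζ, r (t, Z₁ t z) (τ, Z₁ τ ζ) ∂ρ - ∫ ζ, r (t, Z₂ t z) (τ, Z₂ τ ζ) ∂ρ‖
      ≤ 2 * L * B := by
    intro τ hτ
    rw [uIoc_of_le ht.1] at hτ
    refine norm_integral_sub_integral_le
      (.of_bound (by fun_prop : Continuous _).aestronglyMeasurable Cr
        (.of_forall fun _ => hk.norm_r_le _ _))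
      (.of_bound (by fun_prop : Continuous _).aestronglyMeasurable Cr
        (.of_forall fun _ => hk.norm_r_le _ _)) fun ζ => ?_
    refine (hL.norm_r_sub_le t ht τ ⟨hτ.1.le, hτ.2.trans ht.2⟩ _ _ _ _).trans ?_
    exact (mul_le_mul_of_nonneg_left (add_le_add hz (hB τ ⟨hτ.1.le, hτ.2⟩ ζ)) hL0).trans_eq
      (by ring)
  have h_m : ‖∫ ζ, m (t, Z₁ t z) (Z₁ 0 ζ) ∂ρ - ∫ ζ, m (t, Z₂ t z) (Z₂ 0 ζ) ∂ρ‖ ≤ 2 * L * B := by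
    refine norm_integral_sub_integral_le
      (.of_bound (by fun_prop : Continuous _).aestronglyMeasurable Cm
        (.of_forall fun _ => hk.norm_m_le _ _))
      (.of_bound (by fun_prop : Continuous _).aestronglyMeasurable Cm
        (.of_forall fun _ => hk.norm_m_le _ _)) fun ζ => ?_
    refine (hL.norm_m_sub_le t ht _ _ _ _).trans ?_
    exact (mul_le_mul_of_nonneg_left (add_le_add hz (hB 0 ⟨le_rfl, ht.1⟩ ζ)) hL0).trans_eq
      (by ring)
  have h_int : ‖(∫ τ in (0:ℝ)..t, ∫ ζ, r (t, Z₁ t z) (τ, Z₁ τ ζ) ∂ρ)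
      - ∫ τ in (0:ℝ)..t, ∫ ζ, r (t, Z₂ t z) (τ, Z₂ τ ζ) ∂ρ‖ ≤ 2 * L * B * T := by
    rw [← intervalIntegral.integral_sub ((hrZ Z₁ hZ₁).intervalIntegrable _ _)
      ((hrZ Z₂ hZ₂).intervalIntegrable _ _)]
    refine (intervalIntegral.norm_integral_le_of_norm_le_const h_r).trans ?_
    rw [sub_zero, abs_of_nonneg ht.1]
    gcongr
    exact ht.2
  calc _ = ‖((∫ τ in (0:ℝ)..t, ∫ ζ, r (t, Z₁ t z) (τ, Z₁ τ ζ) ∂ρ)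
        - ∫ τ in (0:ℝ)..t, ∫ ζ, r (t, Z₂ t z) (τ, Z₂ τ ζ) ∂ρ)
        + ((∫ ζ, m (t, Z₁ t z) (Z₁ 0 ζ) ∂ρ) - ∫ ζ, m (t, Z₂ t z) (Z₂ 0 ζ) ∂ρ)‖ := by
        rw [mfField, mfField, add_sub_add_comm]
    _ ≤ 2 * L * B * T + 2 * L * B := (norm_add_le _ _).trans (add_le_add h_int h_m)
    _ = 2 * L * (T + 1) * B := by ring

open scoped BoundedContinuousFunction

variable (ρ) in
/-- The unknowns are the displacements `Y (t, z) = Z t z - z`, which unlike the flows `Z` are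
bounded, so that the Picard map acts on a complete metric space. -/
def picard (hk : IsBoundedContinuousKernel r m Cr Cm) (hT : 0 ≤ T) (Y : ℝ × E →ᵇ E) :
    ℝ × E →ᵇ E :=
  .ofNormedAddCommGroup
    (fun p => ∫ s in (0:ℝ)..clamp T p.1, mfField r m ρ (fun t z => z + Y (t, z)) s p.2)
    (intervalIntegral.continuous_parametric_intervalIntegral_of_continuous
      (f := fun (p : ℝ × E) s => mfField r m ρ (fun t z => z + Y (t, z)) s p.2)
      ((continuous_mfField (Z := fun t z => z + Y (t, z)) hk (by fun_prop)).comp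
        (continuous_snd.prodMk continuous_fst.snd)) ((continuous_clamp T).comp continuous_fst))
    ((Cr * T + Cm) * T) fun p => norm_integral_mfField_le hk _ (clamp_mem_Icc hT p.1) p.2

theorem picard_apply (hk : IsBoundedContinuousKernel r m Cr Cm) (hT : 0 ≤ T) (Y : ℝ × E →ᵇ E)
    (p : ℝ × E) :
    picard ρ hk hT Y p
      = ∫ s in (0:ℝ)..clamp T p.1, mfField r m ρ (fun t z => z + Y (t, z)) s p.2 :=
  rfl

theorem norm_iterate_picard_sub_le (hk : IsBoundedContinuousKernel r m Cr Cm)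
    (hL : IsLipschitzKernelOn r m T L) (hT : 0 ≤ T) (n : ℕ) (Y₁ Y₂ : ℝ × E →ᵇ E) (p : ℝ × E) :
    ‖(picard ρ hk hT)^[n] Y₁ p - (picard ρ hk hT)^[n] Y₂ p‖
      ≤ (2 * L * (T + 1) * clamp T p.1) ^ n / n ! * dist Y₁ Y₂ := by
  set c := 2 * L * (T + 1)
  have hc : 0 ≤ c := by have := hL.nonneg; positivity
  have hcont : ∀ (W : ℝ × E →ᵇ E) (z : E),
      Continuous fun s => mfField r m ρ (fun t z => z + W (t, z)) s z := fun W z =>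
    (continuous_mfField (Z := fun t z => z + W (t, z)) hk (by fun_prop)).comp
      (continuous_id.prodMk continuous_const)
  induction n generalizing p with
  | zero => simpa [← dist_eq_norm] using BoundedContinuousFunction.dist_coe_le_dist p
  | succ n ih =>
    obtain ⟨t, z⟩ := p
    have ha := clamp_mem_Icc hT t
    rw [iterate_succ_apply', iterate_succ_apply', picard_apply, picard_apply,
      ← intervalIntegral.integral_sub ((hcont _ z).intervalIntegrable _ _)
        ((hcont _ z).intervalIntegrable _ _)]
    calc _ ≤ ∫ s in (0:ℝ)..clamp T t, c * ((c * s) ^ n / n !) * dist Y₁ Y₂ := by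
          refine intervalIntegral.norm_integral_le_of_norm_le ha.1 (.of_forall fun s hs => ?_)
            (Continuous.intervalIntegrable (by fun_prop) _ _)
          refine (norm_mfField_sub_le hk hL (by fun_prop) (by fun_prop)
            ⟨hs.1.le, hs.2.trans ha.2⟩ (B := (c * s) ^ n / n ! * dist Y₁ Y₂) (fun u hu ζ => ?_)
            z).trans_eq (by ring)
          rw [add_sub_add_left_eq_sub]
          refine (ih (u, ζ)).trans ?_
          rw [clamp_of_mem_Icc ⟨hu.1, hu.2.trans (hs.2.trans ha.2)⟩]
          have := hu.1
          gcongr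
          exact hu.2
      _ = (c * clamp T t) ^ (n + 1) / (n + 1)! * dist Y₁ Y₂ := by
          rw [intervalIntegral.integral_mul_const, integral_mul_mul_pow_div_factorial]

theorem isMFSolOn_of_isFixedPt (hk : IsBoundedContinuousKernel r m Cr Cm) (hT : 0 ≤ T)
    {Y : ℝ × E →ᵇ E} (hY : IsFixedPt (picard ρ hk hT) Y) :
    IsMFSolOn r m ρ T fun t z => z + Y (t, z) := by
  refine ⟨by fun_prop, fun t ht z => ?_⟩
  change z + Y (t, z) = _
  rw [← DFunLike.congr_fun hY (t, z), picard_apply, clamp_of_mem_Icc ht]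

theorem IsMFSolOn.exists_isFixedPt (hk : IsBoundedContinuousKernel r m Cr Cm) (hT : 0 ≤ T)
    {Z : ℝ → E → E} (h : IsMFSolOn r m ρ T Z) :
    ∃ Y, IsFixedPt (picard ρ hk hT) Y ∧ ∀ t ∈ Icc 0 T, ∀ z, Z t z = z + Y (t, z) := by
  let Y : ℝ × E →ᵇ E := .ofNormedAddCommGroup (fun p => Z (clamp T p.1) p.2 - p.2)
    ((h.1.comp (((continuous_clamp T).comp continuous_fst).prodMk continuous_snd)).sub
      continuous_snd)
    ((Cr * T + Cm) * T) fun p => by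
      rw [h.2 _ (clamp_mem_Icc hT p.1), add_sub_cancel_left]
      exact norm_integral_mfField_le hk Z (clamp_mem_Icc hT p.1) p.2
  have hZY : ∀ t ∈ Icc 0 T, ∀ z, Z t z = z + Y (t, z) := fun t ht z => by
    change Z t z = z + (Z (clamp T t) z - z)
    rw [clamp_of_mem_Icc ht, add_sub_cancel]
  refine ⟨Y, ?_, hZY⟩
  ext ⟨t, z⟩
  have ht := clamp_mem_Icc hT t
  rw [picard_apply]
  change _ = Z (clamp T t) z - z
  rw [h.2 _ ht, add_sub_cancel_left]
  refine intervalIntegral.integral_congr fun s hs => ?_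
  rw [uIcc_of_le ht.1] at hs
  refine congrFun (mfField_congr hs.1 fun u hu => ?_) z
  exact funext fun ζ => (hZY u ⟨hu.1, hu.2.trans (hs.2.trans ht.2)⟩ ζ).symm

variable [CompleteSpace E]

theorem existsUnique_isFixedPt_picard (hk : IsBoundedContinuousKernel r m Cr Cm)
    (hL : IsLipschitzKernelOn r m T L) (hT : 0 ≤ T) : ∃! Y, IsFixedPt (picard ρ hk hT) Y := by
  have := hL.nonneg
  refine existsUnique_isFixedPt_of_dist_iterate_le (C := 2 * L * (T + 1) * T) fun n Y₁ Y₂ => ?_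
  refine (BoundedContinuousFunction.dist_le (by positivity)).2 fun p => ?_
  rw [dist_eq_norm]
  refine (norm_iterate_picard_sub_le hk hL hT n Y₁ Y₂ p).trans ?_
  have hp := clamp_mem_Icc hT p.1
  have := hp.1
  gcongr
  exact hp.2

theorem exists_isMFSolOn (hk : IsBoundedContinuousKernel r m Cr Cm)
    (hL : IsLipschitzKernelOn r m T L) (hT : 0 ≤ T) : ∃ Z, IsMFSolOn r m ρ T Z :=
  let ⟨_, hY, _⟩ := existsUnique_isFixedPt_picard hk hL hT
  ⟨_, isMFSolOn_of_isFixedPt hk hT hY⟩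

theorem IsMFSolOn.unique (hk : IsBoundedContinuousKernel r m Cr Cm)
    (hL : IsLipschitzKernelOn r m T L) {Z₁ Z₂ : ℝ → E → E} (h₁ : IsMFSolOn r m ρ T Z₁)
    (h₂ : IsMFSolOn r m ρ T Z₂) {t : ℝ} (ht : t ∈ Icc 0 T) : Z₁ t = Z₂ t := by
  have hT := ht.1.trans ht.2
  obtain ⟨Y₁, hY₁, hZY₁⟩ := h₁.exists_isFixedPt hk hT
  obtain ⟨Y₂, hY₂, hZY₂⟩ := h₂.exists_isFixedPt hk hT
  have hY := (existsUnique_isFixedPt_picard hk hL hT).unique hY₁ hY₂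
  funext z
  rw [hZY₁ t ht, hZY₂ t ht, hY]

theorem exists_forall_isMFSolOn (hk : IsBoundedContinuousKernel r m Cr Cm)
    (hL : ∀ T, 0 < T → ∃ L, IsLipschitzKernelOn r m T L) :
    ∃ W : ℝ → E → E, ∀ T, 0 ≤ T → IsMFSolOn r m ρ T W := by
  choose Zs hZs using fun n : ℕ => (hL (n + 1) (by positivity)).elim fun _ hLn =>
    exists_isMFSolOn (ρ := ρ) hk hLn (by positivity)
  have hagree : ∀ k n : ℕ, ∀ t ∈ Icc (0:ℝ) (k + 1), t ≤ n + 1 → Zs k t = Zs n t := by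
    intro k n t ht htn
    obtain ⟨L, hLkn⟩ := hL (min (k + 1) (n + 1)) (by positivity)
    exact ((hZs k).mono (min_le_left _ _)).unique hk hLkn ((hZs n).mono (min_le_right _ _))
      ⟨ht.1, le_min ht.2 htn⟩
  -- time is clamped below at `0` so that each `Zs n` is only evaluated on `[0, n + 1]`
  set W : ℝ → E → E := fun t => Zs ⌈t⌉₊ (max t 0)
  have hW : ∀ (n : ℕ) (t : ℝ), t < n + 1 → W t = Zs n (max t 0) := fun n t htn =>
    hagree _ _ _ ⟨le_max_right _ _, (max_le (Nat.le_ceil t) (Nat.cast_nonneg _)).trans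
      (by linarith)⟩ (max_le htn.le (by positivity))
  have hWc : Continuous (uncurry W) := continuous_iff_continuousAt.2 fun p => by
    refine ContinuousAt.congr (f := fun q : ℝ × E => Zs ⌈p.1⌉₊ (max q.1 0) q.2)
      ((hZs _).1.comp ((continuous_fst.max continuous_const).prodMk continuous_snd)).continuousAt
      ?_
    filter_upwards [continuous_fst.continuousAt.eventually (gt_mem_nhds (lt_add_one p.1))]
      with q hq
    exact (congrFun (hW _ _ (hq.trans_le (by linarith [Nat.le_ceil p.1]))) q.2).symm
  refine ⟨W, fun T hT => ⟨hWc, fun t ht z => ?_⟩⟩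
  have hWT : ∀ s ∈ Icc 0 t, W s = Zs ⌈T⌉₊ s := fun s hs => by
    rw [hW _ _ (by linarith [hs.2, ht.2, Nat.le_ceil T]), max_eq_left hs.1]
  rw [hWT t ⟨ht.1, le_rfl⟩, (hZs _).2 t ⟨ht.1, by linarith [ht.2, Nat.le_ceil T]⟩ z]
  congr 1
  refine intervalIntegral.integral_congr fun s hs => ?_
  rw [uIcc_of_le ht.1] at hs
  exact congrFun (mfField_congr hs.1 fun u hu => (hWT u ⟨hu.1, hu.2.trans hs.2⟩).symm) z

end Kernel

section Euclidean

variable {d : ℕ} {r : ℝ × Rd d → ℝ × Rd d → Rd d} {m : ℝ × Rd d → Rd d → Rd d}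
  {ρ : Measure (Rd d)} {Cr Cm : ℝ}

theorem IsMFSol.isMFSolOn [IsFiniteMeasure ρ] (hk : IsBoundedContinuousKernel r m Cr Cm)
    {Z : ℝ → Rd d → Rd d} (h : IsMFSol r m ρ Z) (T : ℝ) : IsMFSolOn r m ρ T Z := by
  refine ⟨h.1, fun t ht z => ?_⟩
  have hint := intervalIntegral.integral_eq_sub_of_hasDerivAt (f := fun s => Z s z)
    (f' := fun s => mfField r m ρ Z s z)
    (fun s hs => h.2.2 z s (by rw [uIcc_of_le ht.1] at hs; exact hs.1))
    (((continuous_mfField hk h.1).comp (continuous_id.prodMk continuous_const)).intervalIntegrable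
      0 t)
  rw [hint, h.2.1, add_sub_cancel]

theorem exists_isMFSol_of_forall_isMFSolOn [IsFiniteMeasure ρ]
    (hk : IsBoundedContinuousKernel r m Cr Cm) {W : ℝ → Rd d → Rd d}
    (hW : ∀ T, 0 ≤ T → IsMFSolOn r m ρ T W) :
    ∃ Z, IsMFSol r m ρ Z ∧ ∀ t, 0 ≤ t → Z t = W t := by
  have hF : Continuous fun p : ℝ × Rd d => mfField r m ρ W (max p.1 0) p.2 :=
    (continuous_mfField hk (hW 0 le_rfl).1).comp
      ((continuous_fst.max continuous_const).prodMk continuous_snd)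
  -- for `t < 0`, `Z` continues `W` along its tangent at `0`, so that it is differentiable there
  set Z : ℝ → Rd d → Rd d := fun t z => z + ∫ s in (0:ℝ)..t, mfField r m ρ W (max s 0) z
  have hZW : ∀ t, 0 ≤ t → Z t = W t := fun t ht => funext fun z => by
    rw [(hW t ht).2 t ⟨ht, le_rfl⟩ z]
    refine congrArg (z + ·) (intervalIntegral.integral_congr fun s hs => ?_)
    rw [uIcc_of_le ht] at hs
    simp only [max_eq_left hs.1]
  refine ⟨Z, ⟨?_, fun z => by simp [Z], fun z t ht => ?_⟩, hZW⟩
  · exact continuous_snd.add (intervalIntegral.continuous_parametric_intervalIntegral_of_continuous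
      (f := fun (p : ℝ × Rd d) s => mfField r m ρ W (max s 0) p.2)
      (hF.comp (continuous_snd.prodMk continuous_fst.snd)) continuous_fst)
  · refine (((hF.comp (continuous_id.prodMk continuous_const)).integral_hasStrictDerivAt
      0 t).hasDerivAt.const_add z).congr_deriv ?_
    change _ = mfField r m ρ Z t z
    rw [mfField_congr ht fun s hs => hZW s hs.1, comp_apply, id, max_eq_left ht]

end Euclidean

theorem mean_field_equation_wellposed_general
    (d : ℕ)
    (r : (ℝ × Rd d) → (ℝ × Rd d) → Rd d) (m : (ℝ × Rd d) → Rd d → Rd d)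
    (hrc : Continuous fun q : (ℝ × Rd d) × (ℝ × Rd d) => r q.1 q.2)
    (hrb : ∃ C, ∀ p q, ‖r p q‖ ≤ C)
    (hmc : Continuous fun q : (ℝ × Rd d) × Rd d => m q.1 q.2)
    (hmb : ∃ C, ∀ p ζ, ‖m p ζ‖ ≤ C)
    (hlip : ∀ T : ℝ, 0 < T → ∃ L : ℝ, 0 ≤ L ∧
      ∀ t ∈ Icc (0:ℝ) T, ∀ τ ∈ Icc (0:ℝ) T, ∀ z z' ζ ζ' ζ₀ ζ₀' : Rd d,
        ‖r (t, z) (τ, ζ) - r (t, z') (τ, ζ')‖ + ‖m (t, z) ζ₀ - m (t, z') ζ₀'‖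
          ≤ L * (min 1 ‖z - z'‖ + min 1 ‖ζ - ζ'‖ + min 1 ‖ζ₀ - ζ₀'‖))
    (ρin : Measure (Rd d)) [IsProbabilityMeasure ρin] :
    ∃ Z : ℝ → Rd d → Rd d, IsMFSol r m ρin Z ∧
      ∀ Z' : ℝ → Rd d → Rd d, IsMFSol r m ρin Z' →
        ∀ t : ℝ, 0 ≤ t → ∀ z, Z' t z = Z t z := by
  obtain ⟨Cr, hCr⟩ := hrb
  obtain ⟨Cm, hCm⟩ := hmb
  have hk : IsBoundedContinuousKernel r m Cr Cm := ⟨hrc, hmc, hCr, hCm⟩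
  have hL : ∀ T, 0 < T → ∃ L, IsLipschitzKernelOn r m T L := fun T hT =>
    let ⟨L, hL0, hLT⟩ := hlip T hT
    ⟨L, isLipschitzKernelOn_of_le_min hT.le hL0 hLT⟩
  obtain ⟨W, hW⟩ := exists_forall_isMFSolOn (ρ := ρin) hk hL
  obtain ⟨Z, hZ, hZW⟩ := exists_isMFSol_of_forall_isMFSolOn hk hW
  refine ⟨Z, hZ, fun Z' hZ' t ht z => ?_⟩
  obtain ⟨L, hLt⟩ := hL (t + 1) (by linarith)
  rw [hZW t ht, (hZ'.isMFSolOn hk (t + 1)).unique hk hLt (hW (t + 1) (by linarith))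
    ⟨ht, by linarith⟩]

/-- Existence and uniqueness of the global solution of the mean-field
integro-differential equation for a bounded continuous kernel satisfying the causality
and Lipschitz conditions, for any initial Borel probability measure. -/
theorem mean_field_equation_wellposed
    (d : ℕ) (hd : 1 ≤ d)
    (r : (ℝ × Rd d) → (ℝ × Rd d) → Rd d) (m : (ℝ × Rd d) → Rd d → Rd d)
    (hrc : Continuous fun q : (ℝ × Rd d) × (ℝ × Rd d) => r q.1 q.2)
    (hrb : ∃ C, ∀ p q, ‖r p q‖ ≤ C)
    (hmc : Continuous fun q : (ℝ × Rd d) × Rd d => m q.1 q.2)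
    (hmb : ∃ C, ∀ p ζ, ‖m p ζ‖ ≤ C)
    (hrcaus : ∀ t τ : ℝ, ∀ z ζ : Rd d, τ ∉ Icc 0 t → r (t, z) (τ, ζ) = 0)
    (hmcaus : ∀ t : ℝ, ∀ z ζ : Rd d, t < 0 → m (t, z) ζ = 0)
    (hlip : ∀ T : ℝ, 0 < T → ∃ L : ℝ, 0 ≤ L ∧
      ∀ t ∈ Icc (0:ℝ) T, ∀ τ ∈ Icc (0:ℝ) T, ∀ z z' ζ ζ' ζ₀ ζ₀' : Rd d,
        ‖r (t, z) (τ, ζ) - r (t, z') (τ, ζ')‖ + ‖m (t, z) ζ₀ - m (t, z') ζ₀'‖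
          ≤ L * (min 1 ‖z - z'‖ + min 1 ‖ζ - ζ'‖ + min 1 ‖ζ₀ - ζ₀'‖))
    (ρin : Measure (Rd d)) [IsProbabilityMeasure ρin] :
    ∃ Z : ℝ → Rd d → Rd d, IsMFSol r m ρin Z ∧
      ∀ Z' : ℝ → Rd d → Rd d, IsMFSol r m ρin Z' →
        ∀ t : ℝ, 0 ≤ t → ∀ z, Z' t z = Z t z :=
  mean_field_equation_wellposed_general d r m hrc hrb hmc hmb hlip ρin
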